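/- arXiv:2307.11607 — 2 statements merged into one kernel-verified Lean document; each statement's English description precedes it below -/
import Mathlib

section
/- Let q : {1,…,n} → ℝ≥0, let k ≤ n, and let τ ∈ [0,1]. Under the conditions of the Greedy Replacement construction (each alternative contains the ⌊(1-τ)·k⌋ highest-quality features), each alternative F_i of size k satisfies Σ_{j∈F_i} q(j) ≥ (⌊(1-τ)·k⌋/k) · Q*, where Q* is the maximum of Σ_{j∈S} q(j) over all size-k subsets S ⊆ {1,…,n}. Consequently both the minimum and the sum of qualities over the alternatives are at least the fraction ⌊(1-τ)·k⌋/k of the corresponding optimal objective values (since Q* upper-bounds the quality of any size-k feature set). -/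
theorem greedy_replacement_approximation (n k a : ℕ) (τ : ℝ) (q : Fin n → ℝ)
    (hq : ∀ j, 0 ≤ q j) (hkn : k ≤ n) (hk : 0 < k) (hτ0 : 0 ≤ τ) (hτ1 : τ ≤ 1)
    (T : Finset (Fin n)) (hT : T.card = ⌊(1 - τ) * (k : ℝ)⌋₊)
    (htop : ∀ i ∈ T, ∀ j ∉ T, q j ≤ q i)
    (F : Fin (a + 1) → Finset (Fin n))
    (hF : ∀ i, (F i).card = k) (hTF : ∀ i, T ⊆ F i) :
    (∀ i, ∀ S : Finset (Fin n), S.card = k →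
        ((⌊(1 - τ) * (k : ℝ)⌋₊ : ℝ) / (k : ℝ)) * ∑ j ∈ S, q j ≤ ∑ j ∈ F i, q j) ∧
      (∀ G : Fin (a + 1) → Finset (Fin n), (∀ i, (G i).card = k) →
        ((⌊(1 - τ) * (k : ℝ)⌋₊ : ℝ) / (k : ℝ)) *
            (Finset.univ.inf' Finset.univ_nonempty fun i => ∑ j ∈ G i, q j) ≤
          Finset.univ.inf' Finset.univ_nonempty fun i => ∑ j ∈ F i, q j) ∧
      (∀ G : Fin (a + 1) → Finset (Fin n), (∀ i, (G i).card = k) →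
        ((⌊(1 - τ) * (k : ℝ)⌋₊ : ℝ) / (k : ℝ)) * ∑ i, ∑ j ∈ G i, q j ≤
          ∑ i, ∑ j ∈ F i, q j) := by
  set m : ℕ := ⌊(1 - τ) * (k : ℝ)⌋₊ with hm
  have hmk : m ≤ k := by
    have : (1 - τ) * (k : ℝ) ≤ (k : ℝ) := by nlinarith [Nat.cast_nonneg (α := ℝ) k]
    calc m ≤ ⌊(k : ℝ)⌋₊ := Nat.floor_mono this
    _ = k := Nat.floor_natCast k
  have hk0 : (0 : ℝ) < (k : ℝ) := by exact_mod_cast hk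
  -- key: for any size-k set S, m * Σ_S ≤ k * Σ_T
  have key : ∀ S : Finset (Fin n), S.card = k →
      (m : ℝ) * ∑ j ∈ S, q j ≤ (k : ℝ) * ∑ j ∈ T, q j := by
    intro S hS
    rcases Nat.eq_zero_or_pos m with hm0 | hm0
    · rw [hm0]
      push_cast
      have h1 : (0:ℝ) ≤ ∑ j ∈ T, q j := Finset.sum_nonneg fun j _ => hq j
      nlinarith
    · have hTne : T.Nonempty := Finset.card_pos.mp (by rw [hT]; exact hm0)
      set c : ℝ := T.inf' hTne q with hc
      have hc0 : 0 ≤ c := by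
        obtain ⟨i, hi, hqi⟩ := Finset.exists_mem_eq_inf' hTne q
        rw [hc, hqi]; exact hq i
      set t : ℕ := (S ∩ T).card with ht
      have htm : t ≤ m := by
        rw [ht, ← hT]; exact Finset.card_le_card (Finset.inter_subset_right)
      have htk : t ≤ k := by
        rw [ht, ← hS]; exact Finset.card_le_card (Finset.inter_subset_left)
      set A : ℝ := ∑ j ∈ S ∩ T, q j with hA
      set B : ℝ := ∑ j ∈ S \ T, q j with hB
      set C : ℝ := ∑ j ∈ T \ S, q j with hC
      have hSsum : ∑ j ∈ S, q j = A + B := (Finset.sum_inter_add_sum_sdiff S T q).symm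
      have hTsum : ∑ j ∈ T, q j = A + C := by
        rw [hA, hC, Finset.inter_comm]
        exact (Finset.sum_inter_add_sum_sdiff T S q).symm
      have hAc : (t : ℝ) * c ≤ A := by
        have := Finset.card_nsmul_le_sum (S ∩ T) q c
          (fun x hx => Finset.inf'_le q (Finset.mem_inter.mp hx).2)
        simpa [nsmul_eq_mul, ht, hA] using this
      have hBc : B ≤ ((k : ℝ) - t) * c := by
        have hcard : (S \ T).card = k - t := by
          have := Finset.card_sdiff_add_card_inter S T
          omega
        have := Finset.sum_le_card_nsmul (S \ T) q c
          (fun x hx => by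
            apply Finset.le_inf'
            intro i hi
            exact htop i hi x (Finset.mem_sdiff.mp hx).2)
        rw [hcard] at this
        have : B ≤ ((k - t : ℕ) : ℝ) * c := by simpa [nsmul_eq_mul, hB] using this
        rwa [Nat.cast_sub htk] at this
      have hCc : ((m : ℝ) - t) * c ≤ C := by
        have hcard : (T \ S).card = m - t := by
          have h1 := Finset.card_sdiff_add_card_inter T S
          have h2 : (T ∩ S).card = t := by rw [Finset.inter_comm]
          omega
        have := Finset.card_nsmul_le_sum (T \ S) q c
          (fun x hx => Finset.inf'_le q (Finset.mem_sdiff.mp hx).1)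
        rw [hcard] at this
        have : ((m - t : ℕ) : ℝ) * c ≤ C := by simpa [nsmul_eq_mul, hC] using this
        rwa [Nat.cast_sub htm] at this
      have hmkR : (m : ℝ) ≤ k := by exact_mod_cast hmk
      have htmR : (t : ℝ) ≤ m := by exact_mod_cast htm
      rw [hSsum, hTsum]
      nlinarith [mul_nonneg (sub_nonneg.mpr hmkR) (sub_nonneg.mpr hAc),
        mul_nonneg (Nat.cast_nonneg (α := ℝ) m) (sub_nonneg.mpr hBc),
        mul_nonneg (Nat.cast_nonneg (α := ℝ) k) (sub_nonneg.mpr hCc)]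
  have main : ∀ i, ∀ S : Finset (Fin n), S.card = k →
      ((m : ℝ) / k) * ∑ j ∈ S, q j ≤ ∑ j ∈ F i, q j := by
    intro i S hS
    have h1 : (m : ℝ) * ∑ j ∈ S, q j ≤ (k : ℝ) * ∑ j ∈ T, q j := key S hS
    have h2 : ∑ j ∈ T, q j ≤ ∑ j ∈ F i, q j :=
      Finset.sum_le_sum_of_subset_of_nonneg (hTF i) (fun j _ _ => hq j)
    rw [div_mul_eq_mul_div, div_le_iff₀ hk0]
    nlinarith
  refine ⟨main, ?_, ?_⟩
  · intro G hG
    apply Finset.le_inf'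
    intro i _
    calc ((m : ℝ) / k) * Finset.univ.inf' Finset.univ_nonempty (fun i => ∑ j ∈ G i, q j)
        ≤ ((m : ℝ) / k) * ∑ j ∈ G i, q j := by
          apply mul_le_mul_of_nonneg_left (Finset.inf'_le _ (Finset.mem_univ i))
          positivity
      _ ≤ ∑ j ∈ F i, q j := main i (G i) (hG i)
  · intro G hG
    rw [Finset.mul_sum]
    exact Finset.sum_le_sum fun i _ => main i (G i) (hG i)
end

section
/- Let q : {1,…,n} → ℝ≥0 with values sorted so that q(1) ≥ q(2) ≥ … ≥ q(n), let k > 0, τ = 0.5 with ⌈τ·k⌉ = r, c = k - r, and suppose the Greedy Replacement alternatives are F_i = {1,…,c} ∪ {k + (i-1)·r + 1, …, k + i·r} for i ≥ 1 and F_0 = {1,…,k}. Then there exist quality functions q and parameters (n, k, a, τ) for which the total quality Σ_i Σ_{j∈F_i} q(j) of the greedy solution is strictly smaller than the optimal total quality over all families of size-k sets with pairwise Dice dissimilarity at least τ. A witness is n = 6, q = (9,8,7,3,2,1), k = 2, a = 2, τ = 0.5: the greedy solution has total quality 45 while the family {1,2}, {1,3}, {2,3} is feasible with total quality 48. -/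
/-- Dice dissimilarity of two finite sets. -/
noncomputable def diceDissim {α : Type*} [DecidableEq α] (F' F'' : Finset α) : ℝ :=
  1 - 2 * ((F' ∩ F'').card : ℝ) / ((F'.card : ℝ) + (F''.card : ℝ))

/-- Qualities q = (9,8,7,3,2,1), already sorted decreasingly. -/
noncomputable def qWitness : Fin 6 → ℝ := ![9, 8, 7, 3, 2, 1]

/-- Greedy Replacement solution for k = 2, a = 2, τ = 0.5:
sets {q₁,q₂}, {q₁,q₃}, {q₁,q₄} (0-based indices). -/
def greedySets : Fin 3 → Finset (Fin 6) := ![{0, 1}, {0, 2}, {0, 3}]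

theorem greedy_replacement_suboptimal :
    (∑ i, ∑ j ∈ greedySets i, qWitness j = 45) ∧
    ∃ F : Fin 3 → Finset (Fin 6),
      (∀ i, (F i).card = 2) ∧
      (∀ i j, i ≠ j → diceDissim (F i) (F j) ≥ (0.5 : ℝ)) ∧
      (∑ i, ∑ j ∈ F i, qWitness j = 48) ∧
      (∑ i, ∑ j ∈ greedySets i, qWitness j < ∑ i, ∑ j ∈ F i, qWitness j) := by
  have hg : ∑ i, ∑ j ∈ greedySets i, qWitness j = 45 := by
    simp [greedySets, qWitness, Fin.sum_univ_succ, Finset.sum_insert, Finset.sum_singleton]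
    norm_num
  refine ⟨hg, ![{0, 1}, {0, 2}, {1, 2}], ?_, ?_, ?_, ?_⟩
  · intro i; fin_cases i <;> decide
  · intro i j hij
    fin_cases i <;> fin_cases j <;> simp_all [diceDissim] <;> norm_num
  · simp [qWitness, Fin.sum_univ_succ, Finset.sum_insert, Finset.sum_singleton]
    norm_num
  · rw [hg]
    simp [qWitness, Fin.sum_univ_succ, Finset.sum_insert, Finset.sum_singleton]
    norm_num
end
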